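/- arXiv:1810.00727 — 7 statements merged into one kernel-verified Lean document; each statement's English description precedes it below -/
import Mathlib

section
/- If x : ℝ → ℝ is positive and satisfies x' = x(1 - x/γ) - xy/(1+αξ+x) with 0 < x(0) < γ, γ > 0, α,ξ ≥ 0, and y ≥ 0, then x(t) < γ for all t ≥ 0. -/
/-!
Substituting `u = 1 / x` linearises the logistic equation `x' = x (1 - x / γ)` into
`u' = 1 / γ - u`, so `e^t (1 / x - 1 / γ)` is constant along logistic solutions and nondecreasing
along any positive `x` with `x' ≤ x (1 - x / γ)`. The predation term `x y / (1 + α ξ + x)` is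
nonnegative, so the pest density is such a subsolution; as `e^t (1 / x - 1 / γ)` starts positive,
it stays positive, i.e. `x < γ`.
-/

open Real

theorem hasDerivAt_exp_mul_inv_sub_inv {x : ℝ → ℝ} {x' γ t : ℝ} (hx : HasDerivAt x x' t)
    (hxt : x t ≠ 0) :
    HasDerivAt (fun s => exp s * ((x s)⁻¹ - γ⁻¹))
      (exp t * ((x t * (1 - x t / γ) - x') / x t ^ 2)) t := by
  have hu : HasDerivAt (fun s => (x s)⁻¹ - γ⁻¹) (-x' / x t ^ 2) t := (hx.inv hxt).sub_const γ⁻¹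
  refine ((hasDerivAt_exp t).mul hu).congr_deriv ?_
  field_simp
  ring

theorem monotone_exp_mul_inv_sub_inv {x x' : ℝ → ℝ} {γ : ℝ} (hxpos : ∀ t, 0 < x t)
    (hx : ∀ t, HasDerivAt x (x' t) t) (hsub : ∀ t, x' t ≤ x t * (1 - x t / γ)) :
    Monotone fun t => exp t * ((x t)⁻¹ - γ⁻¹) :=
  monotone_of_hasDerivAt_nonneg (fun t => hasDerivAt_exp_mul_inv_sub_inv (hx t) (hxpos t).ne')
    fun t => mul_nonneg (exp_pos t).le (div_nonneg (sub_nonneg.2 (hsub t)) (sq_nonneg _))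

theorem lt_of_logistic_subsolution {x x' : ℝ → ℝ} {γ : ℝ} (hγ : 0 < γ) (hxpos : ∀ t, 0 < x t)
    (hx : ∀ t, HasDerivAt x (x' t) t) (hsub : ∀ t, x' t ≤ x t * (1 - x t / γ))
    (hx0 : x 0 < γ) {t : ℝ} (ht : 0 ≤ t) : x t < γ := by
  have hw0 : 0 < exp 0 * ((x 0)⁻¹ - γ⁻¹) := by
    rw [exp_zero, one_mul, sub_pos]
    exact (inv_lt_inv₀ hγ (hxpos 0)).2 hx0
  have hwt : 0 < exp t * ((x t)⁻¹ - γ⁻¹) :=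
    hw0.trans_le (monotone_exp_mul_inv_sub_inv hxpos hx hsub ht)
  rw [mul_pos_iff_of_pos_left (exp_pos t), sub_pos] at hwt
  exact (inv_lt_inv₀ hγ (hxpos t)).1 hwt

theorem pest_below_carrying_capacity
    (γ α ξ : ℝ) (x y : ℝ → ℝ)
    (hγ : 0 < γ) (hα : 0 ≤ α) (hξ : 0 ≤ ξ)
    (hxpos : ∀ t, 0 < x t)
    (hy : ∀ t, 0 ≤ y t)
    (hx : ∀ t, HasDerivAt x
      (x t * (1 - x t / γ) - x t * y t / (1 + α * ξ + x t)) t)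
    (hx0 : x 0 < γ) :
    ∀ t ≥ (0:ℝ), x t < γ := by
  intro t ht
  refine lt_of_logistic_subsolution hγ hxpos hx (fun s => ?_) hx0 ht
  have hpred : 0 ≤ x s * y s / (1 + α * ξ + x s) :=
    div_nonneg (mul_nonneg (hxpos s).le (hy s)) (by positivity [hxpos s])
  linarith
end

section
/- Suppose x : [0,∞) → ℝ is positive and satisfies the pest equation of system (1) with positive parameters γ, β, δ, α, ξ, with y nonnegative satisfying the predator equation, and x(0) > 0. Then there is no finite time T* such that x(t) → 0 as t → T*; i.e., x(t) > 0 for every t ≥ 0 (pest eradication is not possible in finite time). -/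
/-!
On `[0, t]` the continuous functions `x` and `y` are bounded by some `C`, so wherever `x > 0` the
per-capita growth rate `1 - x/γ - y/(1 + αξ + x)` is at least `-L` with `L = C/γ + C`. Hence
`e^{L s} x(s)` is nondecreasing up to the first zero `T` of `x`, and `0 < x(0) ≤ e^{L T} x(T) ≤ 0`
is absurd.
-/

open Set

theorem monotoneOn_exp_mul_of_deriv_ge_neg_mul {f f' : ℝ → ℝ} {a b L : ℝ}
    (hf : ContinuousOn f (Icc a b)) (hf' : ∀ s ∈ Ioo a b, HasDerivAt f (f' s) s)
    (hbound : ∀ s ∈ Ioo a b, -L * f s ≤ f' s) :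
    MonotoneOn (fun s => Real.exp (L * s) * f s) (Icc a b) := by
  have hderiv : ∀ s ∈ Ioo a b, HasDerivAt (fun s => Real.exp (L * s) * f s)
      (Real.exp (L * s) * (L * f s + f' s)) s := fun s hs => by
    have hexp : HasDerivAt (fun s => Real.exp (L * s)) (Real.exp (L * s) * L) s := by
      simpa using ((hasDerivAt_id s).const_mul L).exp
    exact (hexp.mul (hf' s hs)).congr_deriv (by ring)
  refine monotoneOn_of_hasDerivWithinAt_nonneg (convex_Icc a b)
    ((Real.continuous_exp.comp (continuous_const.mul continuous_id)).continuousOn.mul hf)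
    (f' := fun s => Real.exp (L * s) * (L * f s + f' s)) ?_ ?_ <;> rw [interior_Icc]
  · exact fun s hs => (hderiv s hs).hasDerivWithinAt
  · exact fun s hs => mul_nonneg (Real.exp_pos _).le (by linarith [hbound s hs])

theorem pos_of_deriv_ge_neg_mul {f f' : ℝ → ℝ} {a b L : ℝ}
    (hf : ContinuousOn f (Icc a b)) (hf' : ∀ s ∈ Ioo a b, HasDerivAt f (f' s) s)
    (hbound : ∀ s ∈ Ioo a b, 0 < f s → -L * f s ≤ f' s) (ha : 0 < f a) :
    ∀ s ∈ Icc a b, 0 < f s := by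
  by_contra! hzero
  obtain ⟨t, ht, hft⟩ := hzero
  set S := Icc a b ∩ f ⁻¹' Iic 0
  have hS : IsClosed S := hf.preimage_isClosed_of_isClosed isClosed_Icc isClosed_Iic
  have hbdd : BddBelow S := ⟨a, fun s hs => hs.1.1⟩
  set T := sInf S
  obtain ⟨⟨haT, hTb⟩, hfT⟩ : T ∈ S := hS.csInf_mem ⟨t, ht, hft⟩ hbdd
  have hpos : ∀ s ∈ Ico a T, 0 < f s := fun s hs => by
    by_contra! hfs
    exact (csInf_le hbdd ⟨⟨hs.1, hs.2.le.trans hTb⟩, hfs⟩).not_gt hs.2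
  have hmono := monotoneOn_exp_mul_of_deriv_ge_neg_mul (L := L)
    (hf.mono (Icc_subset_Icc_right hTb))
    (fun s hs => hf' s ⟨hs.1, hs.2.trans_le hTb⟩)
    (fun s hs => hbound s ⟨hs.1, hs.2.trans_le hTb⟩ (hpos s (Ioo_subset_Ico_self hs)))
    (left_mem_Icc.2 haT) (right_mem_Icc.2 haT) haT
  have hstart : 0 < Real.exp (L * a) * f a := mul_pos (Real.exp_pos _) ha
  have hend : Real.exp (L * T) * f T ≤ 0 := mul_nonpos_of_nonneg_of_nonpos (Real.exp_pos _).le hfT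
  exact (hstart.trans_le hmono).not_ge hend

theorem pest_growth_ge_neg_mul {γ k X Y C : ℝ} (hγ : 0 < γ) (hk : 0 ≤ k)
    (hX : 0 < X) (hXC : X ≤ C) (hY : 0 ≤ Y) (hYC : Y ≤ C) :
    -(C / γ + C) * X ≤ X * (1 - X / γ) - X * Y / (1 + k + X) := by
  have hpred : X * Y / (1 + k + X) ≤ X * C :=
    (div_le_self (by positivity) (by linarith)).trans (mul_le_mul_of_nonneg_left hYC hX.le)
  have hcrowd : X * (X / γ) ≤ X * (C / γ) :=
    mul_le_mul_of_nonneg_left (div_le_div_of_nonneg_right hXC hγ.le) hX.le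
  nlinarith

theorem no_finite_time_pest_eradication_general
    (γ β δ α ξ : ℝ) (x y : ℝ → ℝ)
    (hγ : 0 < γ) (hα : 0 < α) (hξ : 0 < ξ)
    (hx0 : 0 < x 0)
    (hynn : ∀ t, 0 ≤ y t)
    (hx : ∀ t, HasDerivAt x
      (x t * (1 - x t / γ) - x t * y t / (1 + α * ξ + x t)) t)
    (hy : ∀ t, HasDerivAt y
      (β * x t * y t / (1 + α * ξ + x t)
        + β * ξ * y t / (1 + α * ξ + x t) - δ * y t) t) :
    ∀ t ≥ (0:ℝ), 0 < x t := by
  intro t ht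
  have hxc : Continuous x := continuous_iff_continuousAt.2 fun s => (hx s).continuousAt
  have hyc : Continuous y := continuous_iff_continuousAt.2 fun s => (hy s).continuousAt
  obtain ⟨C, hC⟩ := isCompact_Icc.bddAbove_image (hxc.max hyc).continuousOn (K := Icc 0 t)
  refine pos_of_deriv_ge_neg_mul (L := C / γ + C) hxc.continuousOn (fun s _ => hx s)
    (fun s hs hxs => ?_) hx0 t ⟨ht, le_rfl⟩
  have hCs : max (x s) (y s) ≤ C := hC ⟨s, Ioo_subset_Icc_self hs, rfl⟩
  exact pest_growth_ge_neg_mul hγ (by positivity) hxs (le_of_max_le_left hCs) (hynn s)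
    (le_of_max_le_right hCs)

theorem no_finite_time_pest_eradication
    (γ β δ α ξ : ℝ) (x y : ℝ → ℝ)
    (hγ : 0 < γ) (hβ : 0 < β) (hδ : 0 < δ) (hα : 0 < α) (hξ : 0 < ξ)
    (hx0 : 0 < x 0)
    (hynn : ∀ t, 0 ≤ y t)
    (hx : ∀ t, HasDerivAt x
      (x t * (1 - x t / γ) - x t * y t / (1 + α * ξ + x t)) t)
    (hy : ∀ t, HasDerivAt y
      (β * x t * y t / (1 + α * ξ + x t)
        + β * ξ * y t / (1 + α * ξ + x t) - δ * y t) t) :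
    ∀ t ≥ (0:ℝ), 0 < x t :=
  no_finite_time_pest_eradication_general γ β δ α ξ x y hγ hα hξ hx0 hynn hx hy
end

section
/- Suppose x, y solve system (1) with positive parameters and 0 < x(0) < γ, and suppose for all t ≥ 0 we have y(t) ≥ x(t) + 1 + αξ. Then x(t) ≤ x(0)γ/(γ + x(0)t) for all t ≥ 0. -/
/-! Under the phase condition the predation term dominates the linear growth term, so
`x' ≤ -x² / γ`. Hence `t ↦ 1 / x t - t / γ` is nondecreasing, i.e. `1 / x t ≥ 1 / x 0 + t / γ`,
which inverts to the stated algebraic decay. -/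

theorem inv_add_mul_le_inv_of_hasDerivAt_le_neg_mul_sq {x x' : ℝ → ℝ} {c : ℝ}
    (hpos : ∀ t, 0 < x t) (hx : ∀ t, HasDerivAt x (x' t) t)
    (hle : ∀ t ≥ (0 : ℝ), x' t ≤ -c * x t ^ 2) :
    ∀ t ≥ (0 : ℝ), (x 0)⁻¹ + c * t ≤ (x t)⁻¹ := by
  have hderiv : ∀ t, HasDerivAt (fun s => (x s)⁻¹ - c * s) (-x' t / x t ^ 2 - c) t := fun t => by
    simpa using ((hx t).fun_inv (hpos t).ne').fun_sub ((hasDerivAt_id t).const_mul c)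
  have hmono : MonotoneOn (fun s => (x s)⁻¹ - c * s) (Set.Ici 0) := by
    refine monotoneOn_of_hasDerivWithinAt_nonneg (convex_Ici 0)
      (HasDerivAt.continuousOn fun t _ => hderiv t) (fun t _ => (hderiv t).hasDerivWithinAt) ?_
    intro t ht
    rw [interior_Ici] at ht
    have hsq : 0 < x t ^ 2 := pow_pos (hpos t) 2
    rw [sub_nonneg, le_div_iff₀ hsq]
    linarith [hle t ht.le]
  intro t ht
  have h := hmono Set.self_mem_Ici ht ht
  simp only [mul_zero, sub_zero] at h
  linarith

theorem mul_one_sub_div_sub_mul_div_le_neg_one_div_mul_sq {x y D : ℝ} (γ : ℝ)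
    (hx : 0 ≤ x) (hD : 0 < D) (hy : D ≤ y) :
    x * (1 - x / γ) - x * y / D ≤ -(1 / γ) * x ^ 2 := by
  have hpred : x ≤ x * y / D := by
    rw [le_div_iff₀ hD]
    exact mul_le_mul_of_nonneg_left hy hx
  have hlogistic : x * (1 - x / γ) = x - 1 / γ * x ^ 2 := by ring
  linarith

theorem pest_polynomial_decay_general
    (γ α ξ : ℝ) (x y : ℝ → ℝ)
    (hγ : 0 < γ) (hα : 0 < α) (hξ : 0 < ξ)
    (hxpos : ∀ t, 0 < x t)
    (hx : ∀ t, HasDerivAt x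
      (x t * (1 - x t / γ) - x t * y t / (1 + α * ξ + x t)) t)
    (hphase : ∀ t ≥ (0:ℝ), y t ≥ x t + 1 + α * ξ) :
    ∀ t ≥ (0:ℝ), x t ≤ x 0 * γ / (γ + x 0 * t) := by
  have hrate : ∀ t ≥ (0 : ℝ),
      x t * (1 - x t / γ) - x t * y t / (1 + α * ξ + x t) ≤ -(1 / γ) * x t ^ 2 := fun t ht =>
    mul_one_sub_div_sub_mul_div_le_neg_one_div_mul_sq γ (hxpos t).le
      (by have := mul_pos hα hξ; linarith [hxpos t]) (by linarith [hphase t ht])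
  intro t ht
  have hinv := inv_add_mul_le_inv_of_hasDerivAt_le_neg_mul_sq hxpos hx hrate t ht
  have hx0 := hxpos 0
  calc x t = ((x t)⁻¹)⁻¹ := (inv_inv _).symm
    _ ≤ ((x 0)⁻¹ + 1 / γ * t)⁻¹ := inv_anti₀ (by positivity) hinv
    _ = x 0 * γ / (γ + x 0 * t) := by field_simp

theorem pest_polynomial_decay
    (γ β δ α ξ : ℝ) (x y : ℝ → ℝ)
    (hγ : 0 < γ) (hβ : 0 < β) (hδ : 0 < δ) (hα : 0 < α) (hξ : 0 < ξ)
    (hxpos : ∀ t, 0 < x t)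
    (hx0 : 0 < x 0) (hx0γ : x 0 < γ)
    (hx : ∀ t, HasDerivAt x
      (x t * (1 - x t / γ) - x t * y t / (1 + α * ξ + x t)) t)
    (hy : ∀ t, HasDerivAt y
      (β * x t * y t / (1 + α * ξ + x t)
        + β * ξ * y t / (1 + α * ξ + x t) - δ * y t) t)
    (hphase : ∀ t ≥ (0:ℝ), y t ≥ x t + 1 + α * ξ) :
    ∀ t ≥ (0:ℝ), x t ≤ x 0 * γ / (γ + x 0 * t) :=
  pest_polynomial_decay_general γ α ξ x y hγ hα hξ hxpos hx hphase
end

section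
/- Let q ∈ (0,1) and suppose ṽ : [0,T) → ℝ solves ṽ' = -ṽ + ṽ²/(1+ṽ^q) with ṽ(0) = v₀ satisfying v₀ > v₀^q + 1. Then ṽ cannot be extended to a global solution on [0,∞): ṽ blows up in finite time. -/
/-!
Write `f x = -x + x² / (1 + x^q)`. Since `(x - 1 - x^q) / x = 1 - x⁻¹ - x^(q-1)` increases
on `[1, ∞)`, the hypothesis gives `f x ≥ (ε / 2) x^(2-q)` for all `x ≥ v₀`, where
`ε = 1 - v₀⁻¹ - v₀^(q-1) > 0`. In particular `f > 0` at `v₀`, so the solution never drops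
below `v₀`, and then `v^(q-1) + (1 - q) (ε / 2) t` is nonincreasing while `v^(q-1)` stays
positive: this bounds the existence time by `v₀^(q-1) / ((1 - q) ε / 2)`.
-/

open Set Real

theorem one_lt_of_rpow_add_one_lt {q x : ℝ} (hq₀ : 0 ≤ q) (hq₁ : q ≤ 1)
    (h : x ^ q + 1 < x) : 1 < x := by
  rcases lt_or_ge 0 x with hx | hx
  · linarith [rpow_pos_of_pos hx q]
  · have bernoulli : |x| ^ q ≤ 1 + q * (|x| - 1) := by
      simpa using
        rpow_one_add_le_one_add_mul_self (s := |x| - 1) (by linarith [abs_nonneg x]) hq₀ hq₁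
    have hneg : -(|x| ^ q) ≤ x ^ q := neg_le_of_abs_le (abs_rpow_le_abs_rpow x q)
    rw [abs_of_nonpos hx] at bernoulli hneg
    nlinarith

theorem mul_rpow_le_neg_add_sq_div {q a x : ℝ} (hq₀ : 0 ≤ q) (hq₁ : q ≤ 1) (ha : 1 ≤ a)
    (hε : 0 ≤ 1 - a⁻¹ - a ^ (q - 1)) (hax : a ≤ x) :
    (1 - a⁻¹ - a ^ (q - 1)) / 2 * x ^ (2 - q) ≤ -x + x ^ 2 / (1 + x ^ q) := by
  set ε := 1 - a⁻¹ - a ^ (q - 1)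
  have hx : 0 < x := by linarith
  have hxq : 1 ≤ x ^ q := one_le_rpow (by linarith) hq₀
  have hεx : ε ≤ 1 - x⁻¹ - x ^ (q - 1) := by
    have := inv_anti₀ (by linarith) hax
    have := rpow_le_rpow_of_nonpos (by linarith) hax (by linarith : q - 1 ≤ 0)
    linarith
  calc ε / 2 * x ^ (2 - q) = x ^ 2 * ε / (2 * x ^ q) := by
        rw [rpow_sub hx, rpow_two]; ring
    _ ≤ x ^ 2 * ε / (1 + x ^ q) := by gcongr; linarith
    _ ≤ x ^ 2 * (1 - x⁻¹ - x ^ (q - 1)) / (1 + x ^ q) := by gcongr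
    _ = -x + x ^ 2 / (1 + x ^ q) := by
        rw [rpow_sub_one hx.ne']; field_simp; ring

theorem le_of_hasDerivAt_comp_of_pos {v F : ℝ → ℝ} {a c : ℝ}
    (hv : ∀ t ≥ a, HasDerivAt v (F (v t)) t) (hF : 0 < F c) (h₀ : c ≤ v a) :
    ∀ t ≥ a, c ≤ v t := by
  intro t ht
  have key := image_le_of_deriv_right_lt_deriv_boundary (f := -v) (a := a) (b := t)
    (B := fun _ => -c)
    (fun x hx => (hv x hx.1).continuousAt.neg.continuousWithinAt)
    (fun x hx => (hv x hx.1).neg.hasDerivWithinAt) (neg_le_neg h₀)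
    (fun _ => hasDerivAt_const _ (-c))
    (fun x _ hx => by rw [Pi.neg_apply, neg_inj] at hx; simp only [hx]; linarith)
    ⟨ht, le_rfl⟩
  simpa using key

theorem le_rpow_div_of_mul_rpow_le_deriv {v v' : ℝ → ℝ} {k p T : ℝ}
    (hk : 0 < k) (hp : 1 < p) (hT : 0 < T)
    (hpos : ∀ t ∈ Ico 0 T, 0 < v t) (hv : ∀ t ∈ Ico 0 T, HasDerivAt v (v' t) t)
    (hgrowth : ∀ t ∈ Ico 0 T, k * v t ^ p ≤ v' t) :
    T ≤ v 0 ^ (1 - p) / ((p - 1) * k) := by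
  have hc : 0 < (p - 1) * k := mul_pos (sub_pos.2 hp) hk
  set g : ℝ → ℝ := fun t => v t ^ (1 - p) + (p - 1) * k * t
  have hg : ∀ t ∈ Ico 0 T,
      HasDerivAt g (v' t * (1 - p) * v t ^ (1 - p - 1) + (p - 1) * k * 1) t := fun t ht =>
    ((hv t ht).rpow_const (Or.inl (hpos t ht).ne')).add ((hasDerivAt_id t).const_mul _)
  have hanti : AntitoneOn g (Ico 0 T) := by
    refine antitoneOn_of_hasDerivWithinAt_nonpos (convex_Ico 0 T)
      (fun t ht => (hg t ht).continuousAt.continuousWithinAt)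
      (fun t ht => (hg t (interior_subset ht)).hasDerivWithinAt) fun t ht => ?_
    have ht := interior_subset ht
    have hvt := hpos t ht
    have hcancel : v t ^ p * v t ^ (1 - p - 1) = 1 := by
      rw [← rpow_add hvt]; norm_num
    have : k ≤ v' t * v t ^ (1 - p - 1) := by
      have := mul_le_mul_of_nonneg_right (hgrowth t ht) (rpow_pos_of_pos hvt (1 - p - 1)).le
      rwa [mul_assoc, hcancel, mul_one] at this
    nlinarith
  have h0 : (0 : ℝ) ∈ Ico 0 T := ⟨le_rfl, hT⟩
  by_contra! hTt
  set t := v 0 ^ (1 - p) / ((p - 1) * k)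
  have ht : t ∈ Ico 0 T :=
    ⟨div_nonneg (rpow_nonneg (hpos 0 h0).le _) hc.le, hTt⟩
  have hle : g t ≤ g 0 := hanti h0 ht ht.1
  have hkt : (p - 1) * k * t = v 0 ^ (1 - p) := mul_div_cancel₀ _ hc.ne'
  have := rpow_pos_of_pos (hpos t ht) (1 - p)
  simp only [g] at hle
  linarith

theorem blow_up_ode_no_global_solution
    (q v₀ : ℝ) (hq : 0 < q) (hq1 : q < 1)
    (hv₀ : v₀ ^ q + 1 < v₀) :
    ¬ ∃ v : ℝ → ℝ, v 0 = v₀ ∧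
      ∀ t ≥ (0:ℝ), HasDerivAt v (-v t + (v t) ^ 2 / (1 + (v t) ^ q)) t := by
  rintro ⟨v, hv0, hv⟩
  have hv₀1 : 1 < v₀ := one_lt_of_rpow_add_one_lt hq.le hq1.le hv₀
  set ε := 1 - v₀⁻¹ - v₀ ^ (q - 1)
  have hε : 0 < ε := by
    have : ε = (v₀ - v₀ ^ q - 1) / v₀ := by
      simp only [ε]; rw [rpow_sub_one (by positivity)]; field_simp; ring
    rw [this]; apply div_pos <;> linarith
  have hfield : ∀ x, v₀ ≤ x → ε / 2 * x ^ (2 - q) ≤ -x + x ^ 2 / (1 + x ^ q) :=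
    fun x => mul_rpow_le_neg_add_sq_div hq.le hq1.le hv₀1.le hε.le
  have hinv : ∀ t ≥ 0, v₀ ≤ v t :=
    le_of_hasDerivAt_comp_of_pos (F := fun x => -x + x ^ 2 / (1 + x ^ q)) hv
      ((by positivity : 0 < ε / 2 * v₀ ^ (2 - q)).trans_le (hfield v₀ le_rfl)) hv0.ge
  have hbound :=
    le_rpow_div_of_mul_rpow_le_deriv (T := v₀ ^ (q - 1) / ((1 - q) * (ε / 2)) + 1)
    (by positivity) (by linarith : 1 < 2 - q) (by positivity)
    (fun t ht => by linarith [hinv t ht.1]) (fun t ht => hv t ht.1)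
    (fun t ht => hfield _ (hinv t ht.1))
  rw [hv0, show 1 - (2 - q) = q - 1 by ring, show 2 - q - 1 = 1 - q by ring] at hbound
  linarith
end

section
/- Let v, y : [0,T) → ℝ be positive with y(t) ≥ 1 for all t, and v' ≥ -v + v²/(1+v^q) with q ∈ (0,1) and v(0) = v₀ > v₀^q + 1. Then T < ∞, i.e., v blows up in finite time. -/
/-!
Since `v₀ > 1`, the drift `-x + x²/(1+x^q)` is positive at `x = v₀`, so `v` never drops below
`v₀`. On `[v₀, ∞)` the ratio `(x - 1 - x^q)/x = 1 - x⁻¹ - x^(q-1)` is at least its value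
`c₀ > 0` at `v₀`, which makes the drift at least `(c₀/2) x^(2-q)`, with `2 - q > 1`.
Then `v^(q-1)` decreases at a uniform rate while staying positive, which is impossible for all time.
-/

open Set

theorem le_of_deriv_pos_of_eq {f : ℝ → ℝ} {a s t : ℝ} (hf : Differentiable ℝ f) (hs : a ≤ f s)
    (hpos : ∀ r ∈ Ico s t, f r = a → 0 < deriv f r) (hst : s ≤ t) : a ≤ f t :=
  image_le_of_deriv_right_lt_deriv_boundary (f := fun _ => a) (f' := fun _ => 0)
    continuousOn_const (fun _ _ => hasDerivWithinAt_const _ _ _) hs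
    (fun r => (hf r).hasDerivAt) (fun r hr hr_eq => hpos r hr hr_eq.symm) (right_mem_Icc.2 hst)

theorem monotoneOn_one_sub_inv_sub_rpow {q : ℝ} (hq : q < 1) :
    MonotoneOn (fun x : ℝ => 1 - x⁻¹ - x ^ (q - 1)) (Ioi 0) := by
  intro x hx y _ hxy
  have h_inv : y⁻¹ ≤ x⁻¹ := inv_anti₀ hx hxy
  have h_rpow : y ^ (q - 1) ≤ x ^ (q - 1) := Real.rpow_le_rpow_of_nonpos hx hxy (by linarith)
  dsimp only
  linarith

theorem mul_rpow_two_sub_le_neg_add_sq_div {q x c : ℝ} (hq : 0 ≤ q) (hx : 1 ≤ x) (hc : 0 ≤ c)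
    (hcx : c ≤ 1 - x⁻¹ - x ^ (q - 1)) : c / 2 * x ^ (2 - q) ≤ -x + x ^ 2 / (1 + x ^ q) := by
  have hx0 : 0 < x := by linarith
  have hxq : 1 ≤ x ^ q := Real.one_le_rpow hx hq
  have h_factor : -x + x ^ 2 / (1 + x ^ q) = x ^ 2 * (1 - x⁻¹ - x ^ (q - 1)) / (1 + x ^ q) := by
    rw [Real.rpow_sub_one hx0.ne']
    field_simp
    ring
  have h_rpow : x ^ (2 - q) = x ^ 2 / x ^ q := by
    rw [Real.rpow_sub hx0, Real.rpow_two]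
  rw [h_factor, h_rpow]
  calc c / 2 * (x ^ 2 / x ^ q) = x ^ 2 * c / (2 * x ^ q) := by ring
    _ ≤ x ^ 2 * (1 - x⁻¹ - x ^ (q - 1)) / (1 + x ^ q) :=
        div_le_div₀ (mul_nonneg (sq_nonneg x) (hc.trans hcx)) (by gcongr) (by positivity)
          (by linarith)

theorem false_of_pos_of_deriv_ge_mul_rpow {v : ℝ → ℝ} {c p : ℝ} (hc : 0 < c) (hp : 1 < p)
    (hv : Differentiable ℝ v) (hpos : ∀ t ≥ 0, 0 < v t)
    (hderiv : ∀ t ≥ 0, c * v t ^ p ≤ deriv v t) : False := by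
  set δ := (p - 1) * c
  have hδ : 0 < δ := mul_pos (by linarith) hc
  have hu : ∀ t ≥ 0,
      HasDerivAt (fun s => v s ^ (1 - p)) (deriv v t * (1 - p) * v t ^ (1 - p - 1)) t :=
    fun t ht => (hv t).hasDerivAt.rpow_const (Or.inl (hpos t ht).ne')
  have hu_deriv : ∀ t ∈ interior (Ici (0 : ℝ)), deriv (fun s => v s ^ (1 - p)) t ≤ -δ := by
    intro t ht
    rw [interior_Ici] at ht
    have hvt := hpos t ht.le
    rw [(hu t ht.le).deriv]
    have h_cancel : v t ^ p * v t ^ (1 - p - 1) = 1 := by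
      rw [← Real.rpow_add hvt, show p + (1 - p - 1) = 0 by ring, Real.rpow_zero]
    have h_neg : (1 - p) * v t ^ (1 - p - 1) ≤ 0 :=
      mul_nonpos_of_nonpos_of_nonneg (by linarith) (Real.rpow_nonneg hvt.le _)
    calc deriv v t * (1 - p) * v t ^ (1 - p - 1)
        = deriv v t * ((1 - p) * v t ^ (1 - p - 1)) := by ring
      _ ≤ c * v t ^ p * ((1 - p) * v t ^ (1 - p - 1)) :=
          mul_le_mul_of_nonpos_right (hderiv t ht.le) h_neg
      _ = c * (1 - p) * (v t ^ p * v t ^ (1 - p - 1)) := by ring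
      _ = -δ := by rw [h_cancel]; ring
  set T := v 0 ^ (1 - p) / δ
  have hT : 0 ≤ T := by have := hpos 0 le_rfl; positivity
  have h_mvt := (convex_Ici (0 : ℝ)).image_sub_le_mul_sub_of_deriv_le
    (fun t ht => (hu t ht).continuousAt.continuousWithinAt)
    (fun t ht => (hu t (interior_subset ht)).differentiableAt.differentiableWithinAt)
    hu_deriv 0 self_mem_Ici T hT hT
  have h_end : 0 < v T ^ (1 - p) := Real.rpow_pos_of_pos (hpos T hT) _
  have : δ * T = v 0 ^ (1 - p) := mul_div_cancel₀ _ hδ.ne'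
  simp only [sub_zero] at h_mvt
  linarith

theorem comparison_finite_time_blowup_general
    (q v₀ : ℝ) (hq : 0 < q) (hq1 : q < 1)
    (hv₀ : v₀ ^ q + 1 < v₀)
    (v : ℝ → ℝ)
    (hv0 : v 0 = v₀)
    (hvpos : ∀ t ≥ (0:ℝ), 0 < v t)
    (hdiff : Differentiable ℝ v)
    (hv' : ∀ t ≥ (0:ℝ), deriv v t ≥ -v t + (v t) ^ 2 / (1 + (v t) ^ q)) :
    False := by
  have hv₀_pos : 0 < v₀ := hv0 ▸ hvpos 0 le_rfl
  have hv₀_one : 1 ≤ v₀ := by linarith [Real.rpow_nonneg hv₀_pos.le q]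
  set c₀ := 1 - v₀⁻¹ - v₀ ^ (q - 1)
  have hc₀ : 0 < c₀ := by
    have : v₀ * c₀ = v₀ - 1 - v₀ ^ q := by
      simp only [c₀]; rw [Real.rpow_sub_one hv₀_pos.ne']; field_simp
    nlinarith
  have h_drift : ∀ x ≥ v₀, c₀ / 2 * x ^ (2 - q) ≤ -x + x ^ 2 / (1 + x ^ q) := fun x hx =>
    mul_rpow_two_sub_le_neg_add_sq_div hq.le (hv₀_one.trans hx) hc₀.le
      (monotoneOn_one_sub_inv_sub_rpow hq1 hv₀_pos (hv₀_pos.trans_le hx) hx)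
  have h_above : ∀ t ≥ 0, v₀ ≤ v t := fun t ht =>
    le_of_deriv_pos_of_eq hdiff hv0.ge (fun r hr hr_eq => by
      have h_deriv := hv' r hr.1
      rw [hr_eq] at h_deriv
      have : 0 < c₀ / 2 * v₀ ^ (2 - q) := by positivity
      linarith [h_drift v₀ le_rfl]) ht
  exact false_of_pos_of_deriv_ge_mul_rpow (half_pos hc₀) (by linarith : 1 < 2 - q) hdiff hvpos
    fun t ht => (h_drift (v t) (h_above t ht)).trans (hv' t ht)

theorem comparison_finite_time_blowup
    (q v₀ : ℝ) (hq : 0 < q) (hq1 : q < 1)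
    (hv₀ : v₀ ^ q + 1 < v₀)
    (v y : ℝ → ℝ)
    (hv0 : v 0 = v₀)
    (hvpos : ∀ t ≥ (0:ℝ), 0 < v t)
    (hy1 : ∀ t ≥ (0:ℝ), 1 ≤ y t)
    (hdiff : Differentiable ℝ v)
    (hv' : ∀ t ≥ (0:ℝ), deriv v t ≥ -v t + (v t) ^ 2 / (1 + (v t) ^ q)) :
    False :=
  comparison_finite_time_blowup_general q v₀ hq hq1 hv₀ v hv0 hvpos hdiff hv'
end

section
/- Consider system (2a): x' = x(1-x/γ) - xy/(1+αξ(x)+x), y' = βxy/(1+αξ(x)+x) + βξ(x)y/(1+αξ(x)+x) - δy, with positive parameters γ, β, δ, α, positive initial data, and a density-dependent food function satisfying ξ(x) ≥ 0 and ξ(x) ≤ ξ̄ for all x > 0 (some constant ξ̄). Then pest eradication is not possible in finite time: x(t) > 0 for all t ≥ 0. -/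
/-!
Let `c` be the first zero of `x`. On `[0, c]` both populations are bounded, say by `M` and `N`,
and as long as `x > 0` the hypothesis `ξ ≥ 0` makes the Holling denominator at least `1`, so
`x' ≥ -(M / γ + N) x`. The lower Grönwall inequality then gives
`x c ≥ x 0 * exp (-(M / γ + N) c) > 0`.
-/

open Set Real

theorem exists_first_zero_of_continuousOn {f : ℝ → ℝ} {a b : ℝ} (hab : a ≤ b)
    (hf : ContinuousOn f (Icc a b)) (ha : 0 < f a) (hb : f b ≤ 0) :
    ∃ c ∈ Icc a b, f c = 0 ∧ ∀ t ∈ Ico a c, 0 < f t := by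
  have hzeros : IsCompact (Icc a b ∩ f ⁻¹' {0}) :=
    isCompact_Icc.of_isClosed_subset
      (hf.preimage_isClosed_of_isClosed isClosed_Icc isClosed_singleton) inter_subset_left
  obtain ⟨c, ⟨hc, hfc⟩, hleast⟩ :=
    hzeros.exists_isLeast (intermediate_value_Icc' hab hf ⟨hb, ha.le⟩)
  refine ⟨c, hc, hfc, fun t ht => ?_⟩
  by_contra! hft
  obtain ⟨u, hu, hfu⟩ := intermediate_value_Icc' ht.1 (hf.mono (Icc_subset_Icc_right
    (ht.2.le.trans hc.2))) ⟨hft, ha.le⟩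
  have hcu : c ≤ u := hleast ⟨⟨hu.1, hu.2.trans (ht.2.le.trans hc.2)⟩, hfu⟩
  exact (hu.2.trans_lt ht.2).not_ge hcu

theorem mul_exp_le_of_neg_mul_le_deriv_right {f f' : ℝ → ℝ} {K a b : ℝ}
    (hf : ContinuousOn f (Icc a b)) (hf' : ∀ t ∈ Ico a b, HasDerivWithinAt f (f' t) (Ici t) t)
    (bound : ∀ t ∈ Ico a b, -K * f t ≤ f' t) :
    ∀ t ∈ Icc a b, f a * exp (-K * (t - a)) ≤ f t := by
  intro t ht
  have hneg := le_gronwallBound_of_liminf_deriv_right_le (f := -f) (f' := -f') (K := -K) (ε := 0)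
    hf.neg (fun s hs _ hr => (hf' s hs).neg.liminf_right_slope_le hr) le_rfl
    (fun s hs => by simp only [Pi.neg_apply]; linarith [bound s hs]) t ht
  simp only [gronwallBound_ε0, Pi.neg_apply] at hneg
  linarith

theorem neg_mul_le_logistic_sub_predation {γ α w u v M N : ℝ} (hγ : 0 < γ) (hα : 0 ≤ α)
    (hw : 0 ≤ w) (hu : 0 < u) (huM : u ≤ M) (hv : 0 ≤ v) (hvN : v ≤ N) :
    -(M / γ + N) * u ≤ u * (1 - u / γ) - u * v / (1 + α * w + u) := by
  have hden : 1 ≤ 1 + α * w + u := by nlinarith [mul_nonneg hα hw]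
  have hpred : u * v / (1 + α * w + u) ≤ N * u :=
    (div_le_self (mul_nonneg hu.le hv) hden).trans (by nlinarith)
  have hlogistic : -(M / γ) * u ≤ u * (1 - u / γ) := by
    have : u / γ ≤ M / γ := div_le_div_of_nonneg_right huM hγ.le
    nlinarith
  linarith

theorem nonnegative_density_dependent_food_no_finite_eradication_general
    (γ β δ α ξbar : ℝ) (ξ : ℝ → ℝ) (x y : ℝ → ℝ)
    (hγ : 0 < γ) (hα : 0 < α)
    (hξ : ∀ s > (0:ℝ), 0 ≤ ξ s ∧ ξ s ≤ ξbar)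
    (hx0 : 0 < x 0)
    (hynn : ∀ t, 0 ≤ y t)
    (hx : ∀ t, HasDerivAt x
      (x t * (1 - x t / γ) - x t * y t / (1 + α * ξ (x t) + x t)) t)
    (hy : ∀ t, HasDerivAt y
      (β * x t * y t / (1 + α * ξ (x t) + x t)
        + β * ξ (x t) * y t / (1 + α * ξ (x t) + x t) - δ * y t) t) :
    ∀ t ≥ (0:ℝ), 0 < x t := by
  intro T hT
  by_contra! hxT
  have hxc : Continuous x := continuous_iff_continuousAt.2 fun t => (hx t).continuousAt
  have hyc : Continuous y := continuous_iff_continuousAt.2 fun t => (hy t).continuousAt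
  obtain ⟨c, hc, hxc0, hpos⟩ := exists_first_zero_of_continuousOn hT hxc.continuousOn hx0 hxT
  obtain ⟨M, hM⟩ := (isCompact_Icc (a := 0) (b := c)).bddAbove_image hxc.continuousOn
  obtain ⟨N, hN⟩ := (isCompact_Icc (a := 0) (b := c)).bddAbove_image hyc.continuousOn
  have hgrowth : ∀ t ∈ Ico 0 c, -(M / γ + N) * x t ≤
      x t * (1 - x t / γ) - x t * y t / (1 + α * ξ (x t) + x t) := fun t ht =>
    neg_mul_le_logistic_sub_predation hγ hα.le (hξ _ (hpos t ht)).1 (hpos t ht)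
      (hM (mem_image_of_mem x (Ico_subset_Icc_self ht))) (hynn t)
      (hN (mem_image_of_mem y (Ico_subset_Icc_self ht)))
  have hlower := mul_exp_le_of_neg_mul_le_deriv_right hxc.continuousOn
    (fun t _ => (hx t).hasDerivWithinAt) hgrowth c ⟨hc.1, le_rfl⟩
  rw [hxc0] at hlower
  exact hlower.not_gt (mul_pos hx0 (exp_pos _))

theorem nonnegative_density_dependent_food_no_finite_eradication
    (γ β δ α ξbar : ℝ) (ξ : ℝ → ℝ) (x y : ℝ → ℝ)
    (hγ : 0 < γ) (hβ : 0 < β) (hδ : 0 < δ) (hα : 0 < α)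
    (hξ : ∀ s > (0:ℝ), 0 ≤ ξ s ∧ ξ s ≤ ξbar)
    (hx0 : 0 < x 0) (hy0 : 0 < y 0)
    (hynn : ∀ t, 0 ≤ y t)
    (hx : ∀ t, HasDerivAt x
      (x t * (1 - x t / γ) - x t * y t / (1 + α * ξ (x t) + x t)) t)
    (hy : ∀ t, HasDerivAt y
      (β * x t * y t / (1 + α * ξ (x t) + x t)
        + β * ξ (x t) * y t / (1 + α * ξ (x t) + x t) - δ * y t) t) :
    ∀ t ≥ (0:ℝ), 0 < x t :=
  nonnegative_density_dependent_food_no_finite_eradication_general γ β δ α ξbar ξ x y hγ hα hξ hx0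
    hynn hx hy
end

section
/- Let V : [0,T*) → ℝ be positive with V' ≤ C·x·V² where C > 0, x : [0,T*] → ℝ is continuous and nonnegative, and suppose x(t) → 0 as t → T* with V = y/x for y continuous and bounded on [0,T*]. Then V does not tend to infinity as t → T*. -/
/-!
Since `V = y / x` with `|y| ≤ M`, we have `x V ≤ M`, so the hypothesis `V' ≤ C x V²` gives the
linear bound `V' ≤ C M V`. Hence `log V` grows at most linearly and `V` stays below
`V 0 * exp (C M T)` on `[0, T)`: it cannot tend to infinity at `T`.
-/

open Filter Real Set

-- Gronwall through `log V`, whose derivative is `V' / V ≤ k`.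
lemma le_mul_exp_of_deriv_le_mul {V : ℝ → ℝ} {k : ℝ} {D : Set ℝ} (hD : Convex ℝ D)
    (hdiff : ∀ t ∈ D, DifferentiableAt ℝ V t) (hpos : ∀ t ∈ D, 0 < V t)
    (hderiv : ∀ t ∈ D, deriv V t ≤ k * V t) {s t : ℝ} (hs : s ∈ D) (ht : t ∈ D)
    (hst : s ≤ t) : V t ≤ V s * exp (k * (t - s)) := by
  have hlog_diff : ∀ u ∈ D, DifferentiableAt ℝ (fun u => log (V u)) u := fun u hu =>
    (hdiff u hu).log (hpos u hu).ne'
  have hlog_deriv : ∀ u ∈ interior D, deriv (fun u => log (V u)) u ≤ k := by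
    intro u hu
    have hu' := interior_subset hu
    rw [((hdiff u hu').hasDerivAt.log (hpos u hu').ne').deriv, div_le_iff₀ (hpos u hu')]
    exact hderiv u hu'
  have hlog := hD.image_sub_le_mul_sub_of_deriv_le
    (fun u hu => (hlog_diff u hu).continuousAt.continuousWithinAt)
    (fun u hu => (hlog_diff u (interior_subset hu)).differentiableWithinAt) hlog_deriv s hs t ht hst
  calc V t = exp (log (V t)) := (exp_log (hpos t ht)).symm
    _ ≤ exp (log (V s) + k * (t - s)) := exp_le_exp.2 (by linarith)
    _ = V s * exp (k * (t - s)) := by rw [exp_add, exp_log (hpos s hs)]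

theorem ratio_no_blowup_general
    (T C : ℝ) (hT : 0 < T) (hC : 0 < C)
    (V x y : ℝ → ℝ)
    (hV : ∀ t ∈ Set.Ico 0 T, V t = y t / x t)
    (hVpos : ∀ t ∈ Set.Ico 0 T, 0 < V t)
    (hybdd : ∃ M : ℝ, ∀ t ∈ Set.Icc 0 T, |y t| ≤ M)
    (hVdiff : ∀ t ∈ Set.Ico 0 T, DifferentiableAt ℝ V t)
    (hV' : ∀ t ∈ Set.Ico 0 T, deriv V t ≤ C * x t * (V t) ^ 2) :
    ¬ Filter.Tendsto V (nhdsWithin T (Set.Iio T)) Filter.atTop := by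
  intro hblow
  obtain ⟨M, hM⟩ := hybdd
  have hM0 : 0 ≤ M := (abs_nonneg _).trans (hM 0 ⟨le_rfl, hT.le⟩)
  -- `x t ≠ 0`, since otherwise `V t = y t / 0 = 0`.
  have hxV : ∀ t ∈ Ico 0 T, x t * V t = y t := fun t ht => by
    have hVt := hVpos t ht
    rw [hV t ht] at hVt ⊢
    exact mul_div_cancel₀ _ (div_ne_zero_iff.1 hVt.ne').2
  have hlinear : ∀ t ∈ Ico 0 T, deriv V t ≤ C * M * V t := fun t ht =>
    calc deriv V t ≤ C * x t * V t ^ 2 := hV' t ht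
      _ = C * y t * V t := by rw [← hxV t ht]; ring
      _ ≤ C * M * V t := by
        gcongr
        · exact (hVpos t ht).le
        · exact (le_abs_self _).trans (hM t (Ico_subset_Icc_self ht))
  have hbound : ∀ t ∈ Ico 0 T, V t ≤ V 0 * exp (C * M * T) := fun t ht =>
    calc V t ≤ V 0 * exp (C * M * (t - 0)) :=
          le_mul_exp_of_deriv_le_mul (convex_Ico 0 T) hVdiff hVpos hlinear ⟨le_rfl, hT⟩ ht ht.1
      _ ≤ V 0 * exp (C * M * T) := by
        gcongr
        · exact (hVpos 0 ⟨le_rfl, hT⟩).le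
        · linarith [ht.1, ht.2]
  exact not_isBoundedUnder_of_tendsto_atTop hblow
    (isBoundedUnder_of_eventually_le (eventually_of_mem (Ico_mem_nhdsLT hT) hbound))

theorem ratio_no_blowup
    (T C : ℝ) (hT : 0 < T) (hC : 0 < C)
    (V x y : ℝ → ℝ)
    (hV : ∀ t ∈ Set.Ico 0 T, V t = y t / x t)
    (hVpos : ∀ t ∈ Set.Ico 0 T, 0 < V t)
    (hxcont : ContinuousOn x (Set.Icc 0 T))
    (hxnn : ∀ t ∈ Set.Icc 0 T, 0 ≤ x t)
    (hycont : ContinuousOn y (Set.Icc 0 T))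
    (hybdd : ∃ M : ℝ, ∀ t ∈ Set.Icc 0 T, |y t| ≤ M)
    (hVdiff : ∀ t ∈ Set.Ico 0 T, DifferentiableAt ℝ V t)
    (hV' : ∀ t ∈ Set.Ico 0 T, deriv V t ≤ C * x t * (V t) ^ 2)
    (hxlim : Filter.Tendsto x (nhdsWithin T (Set.Iio T)) (nhds 0)) :
    ¬ Filter.Tendsto V (nhdsWithin T (Set.Iio T)) Filter.atTop :=
  ratio_no_blowup_general T C hT hC V x y hV hVpos hybdd hVdiff hV'
end
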